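/- The complete graph K₆ admits no orientation σ with skew-adjacency matrix S satisfying SᵀS = 5·I₆; equivalently, no orientation of K₆ attains skew energy 6√5. -/

import Mathlib

open Matrix BigOperators

/-- The skew energy of a real matrix `S`: the sum of its singular values, i.e. the
square roots of the eigenvalues of `Sᵀ * S` (which equals `Sᴴ * S` over `ℝ`). -/
noncomputable def skewEnergy {α : Type*} [Fintype α] [DecidableEq α]
    (S : Matrix α α ℝ) : ℝ :=
  ∑ i, Real.sqrt ((Matrix.isHermitian_conjTranspose_mul_self S).eigenvalues i)

/-- `S` is the skew-adjacency matrix of some orientation of the simple graph `G`: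
`S` is skew-symmetric with entries in `{0, ±1}` and `|S i j| = 1` iff `ij` is an edge. -/
def IsSkewAdj {α : Type*} (G : SimpleGraph α) (S : Matrix α α ℝ) : Prop :=
  Sᵀ = -S ∧ ∀ i j, (G.Adj i j → (S i j = 1 ∨ S i j = -1)) ∧ (¬ G.Adj i j → S i j = 0)

/-!
The eigenvalues `λᵢ` of `SᵀS` for an orientation `S` of a `k`-regular graph on `n` vertices are
nonnegative with `∑ λᵢ = tr (SᵀS) = n k`, so skew energy `∑ √λᵢ = n √k` forces
`∑ (√λᵢ - √k)² = 0`, i.e. `SᵀS = k I`. For `Kₙ` the matrix `H = I + S` then has entries `±1` and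
`HᵀH = n I`. Any three pairwise orthogonal `±1` columns `u, v, w` give
`∑ₖ (1 + uₖvₖ)(1 + uₖwₖ) = n` with every summand `0` or `4`, so `4 ∣ n`, which fails for `n = 6`.
-/

open Finset

theorem Matrix.IsHermitian.eq_smul_one_of_eigenvalues_eq {n 𝕜 : Type*} [Fintype n]
    [DecidableEq n] [RCLike 𝕜] {A : Matrix n n 𝕜} (hA : A.IsHermitian) {c : ℝ}
    (h : ∀ i, hA.eigenvalues i = c) : A = c • (1 : Matrix n n 𝕜) := by
  have hD : diagonal (RCLike.ofReal ∘ hA.eigenvalues) = c • (1 : Matrix n n 𝕜) := by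
    ext i j
    simp [diagonal_apply, one_apply, h, RCLike.real_smul_eq_coe_mul]
  rw [hA.spectral_theorem, hD, RCLike.real_smul_eq_coe_smul (K := 𝕜), map_smul, map_one]

theorem Real.eq_of_sum_sqrt_eq_card_mul {ι : Type*} [Fintype ι] {x : ι → ℝ} {c : ℝ}
    (hx : ∀ i, 0 ≤ x i) (hc : 0 ≤ c) (hsum : ∑ i, x i = Fintype.card ι * c)
    (hsqrt : ∑ i, √(x i) = Fintype.card ι * √c) (i : ι) : x i = c := by
  have hsq : ∑ j, (√(x j) - √c) ^ 2 = 0 := by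
    have hexpand : ∀ j, (√(x j) - √c) ^ 2 = x j - 2 * √c * √(x j) + c := fun j => by
      rw [sub_sq, Real.sq_sqrt (hx j), Real.sq_sqrt hc]; ring
    simp only [hexpand, sum_add_distrib, sum_sub_distrib, ← mul_sum, hsum, hsqrt, sum_const,
      card_univ, nsmul_eq_mul]
    linear_combination (-2 * (Fintype.card ι : ℝ)) * Real.sq_sqrt hc
  have hi := (sum_eq_zero_iff_of_nonneg fun j _ => sq_nonneg _).mp hsq i (mem_univ i)
  rw [← Real.sqrt_inj (hx i) hc]
  exact sub_eq_zero.mp (pow_eq_zero_iff two_ne_zero |>.mp hi)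

theorem four_dvd_card_of_orthogonal_signs {κ : Type*} [Fintype κ] {u v w : κ → ℝ}
    (hu : ∀ k, u k = 1 ∨ u k = -1) (hv : ∀ k, v k = 1 ∨ v k = -1)
    (hw : ∀ k, w k = 1 ∨ w k = -1)
    (huv : u ⬝ᵥ v = 0) (huw : u ⬝ᵥ w = 0) (hvw : v ⬝ᵥ w = 0) :
    4 ∣ Fintype.card κ := by
  simp only [dotProduct] at huv huw hvw
  have hterm : ∀ k, (1 + u k * v k) * (1 + u k * w k)
      = 4 * if u k = v k ∧ u k = w k then 1 else 0 := fun k => by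
    rcases hu k with h | h <;> rcases hv k with h' | h' <;> rcases hw k with h'' | h'' <;>
      norm_num [h, h', h'']
  have hexpand : ∀ k, (1 + u k * v k) * (1 + u k * w k)
      = 1 + u k * v k + u k * w k + v k * w k := fun k => by
    rcases hu k with h | h <;> rw [h] <;> ring
  have hcount : (Fintype.card κ : ℝ) = 4 * #{k | u k = v k ∧ u k = w k} := by
    calc (Fintype.card κ : ℝ)
        = ∑ k, (1 + u k * v k) * (1 + u k * w k) := by
          simp [hexpand, sum_add_distrib, huv, huw, hvw]
      _ = 4 * #{k | u k = v k ∧ u k = w k} := by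
          simp only [hterm, ← mul_sum, sum_boole]
  exact ⟨_, by exact_mod_cast hcount⟩

theorem Matrix.transpose_mul_self_eq_smul_one_of_skewEnergy_eq {ι : Type*} [Fintype ι]
    [DecidableEq ι] {S : Matrix ι ι ℝ} {c : ℝ} (hc : 0 ≤ c)
    (htrace : (Sᵀ * S).trace = Fintype.card ι * c)
    (henergy : skewEnergy S = Fintype.card ι * √c) : Sᵀ * S = c • 1 := by
  have hH := isHermitian_conjTranspose_mul_self S
  rw [← conjTranspose_eq_transpose_of_trivial S] at htrace ⊢
  refine hH.eq_smul_one_of_eigenvalues_eq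
    (Real.eq_of_sum_sqrt_eq_card_mul (eigenvalues_conjTranspose_mul_self_nonneg S) hc ?_ henergy)
  have hsum := hH.trace_eq_sum_eigenvalues
  simp only [RCLike.ofReal_real_eq_id, id] at hsum
  rwa [← hsum]

theorem Matrix.transpose_one_add_mul_one_add_of_transpose_eq_neg {n R : Type*} [Fintype n]
    [DecidableEq n] [Ring R] {S : Matrix n n R} (hS : Sᵀ = -S) :
    (1 + S)ᵀ * (1 + S) = 1 + Sᵀ * S := by
  rw [transpose_add, transpose_one, hS]
  noncomm_ring

namespace IsSkewAdj

variable {α : Type*} {G : SimpleGraph α} {S : Matrix α α ℝ}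

theorem mul_self_apply (hS : IsSkewAdj G S) [DecidableRel G.Adj] (i j : α) :
    S i j * S i j = if G.Adj i j then 1 else 0 := by
  by_cases hij : G.Adj i j
  · rcases (hS.2 i j).1 hij with h | h <;> simp [hij, h]
  · simp [hij, (hS.2 i j).2 hij]

theorem transpose_mul_self_apply_self [Fintype α] [DecidableRel G.Adj] (hS : IsSkewAdj G S)
    (i : α) : (Sᵀ * S) i i = G.degree i := by
  simp only [mul_apply, transpose_apply, hS.mul_self_apply, sum_boole, G.adj_comm _ i,
    ← SimpleGraph.card_neighborFinset_eq_degree, SimpleGraph.neighborFinset_eq_filter]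

theorem trace_transpose_mul_self [Fintype α] [DecidableRel G.Adj] (hS : IsSkewAdj G S) {k : ℕ}
    (hG : G.IsRegularOfDegree k) : (Sᵀ * S).trace = Fintype.card α * k := by
  simp [trace, hS.transpose_mul_self_apply_self, hG.degree_eq]

theorem transpose_mul_self_eq_smul_one_of_skewEnergy_eq [Fintype α] [DecidableEq α]
    [DecidableRel G.Adj] (hS : IsSkewAdj G S) {k : ℕ} (hG : G.IsRegularOfDegree k)
    (henergy : skewEnergy S = Fintype.card α * √k) : Sᵀ * S = (k : ℝ) • 1 :=
  Matrix.transpose_mul_self_eq_smul_one_of_skewEnergy_eq k.cast_nonneg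
    (hS.trace_transpose_mul_self hG) henergy

theorem one_add_apply_of_top [DecidableEq α] (hS : IsSkewAdj ⊤ S) (i j : α) :
    (1 + S) i j = 1 ∨ (1 + S) i j = -1 := by
  by_cases hij : i = j
  · subst hij
    simp [(hS.2 i i).2 (by simp)]
  · simpa [one_apply, hij] using (hS.2 i j).1 hij

theorem four_dvd_card_of_transpose_mul_self_eq_smul_one [Fintype α] [DecidableEq α]
    (hS : IsSkewAdj ⊤ S) {c : ℝ} (hc : Sᵀ * S = c • 1) {i j l : α} (hij : i ≠ j) (hil : i ≠ l)
    (hjl : j ≠ l) : 4 ∣ Fintype.card α := by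
  have hH : (1 + S)ᵀ * (1 + S) = (1 + c) • 1 := by
    rw [transpose_one_add_mul_one_add_of_transpose_eq_neg hS.1, hc, add_smul, one_smul]
  have horth : ∀ a b, a ≠ b → (1 + S)ᵀ a ⬝ᵥ (1 + S)ᵀ b = 0 := fun a b hab => by
    have hab' := congrFun (congrFun hH a) b
    rw [mul_apply', Matrix.smul_apply, one_apply_ne hab, smul_zero] at hab'
    exact hab'
  exact four_dvd_card_of_orthogonal_signs (hS.one_add_apply_of_top · i)
    (hS.one_add_apply_of_top · j) (hS.one_add_apply_of_top · l)
    (horth i j hij) (horth i l hil) (horth j l hjl)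

end IsSkewAdj

theorem K6_no_optimum_orientation :
    ¬ ∃ S : Matrix (Fin 6) (Fin 6) ℝ,
        IsSkewAdj (⊤ : SimpleGraph (Fin 6)) S ∧
        (Sᵀ * S = (5 : ℝ) • 1 ∨ skewEnergy S = 6 * Real.sqrt 5) := by
  rintro ⟨S, hS, hoptimum⟩
  have hconference : Sᵀ * S = (5 : ℝ) • 1 := by
    refine hoptimum.elim id fun henergy => ?_
    simpa using hS.transpose_mul_self_eq_smul_one_of_skewEnergy_eq
      SimpleGraph.IsRegularOfDegree.top (by simpa using henergy)
  have hdvd := hS.four_dvd_card_of_transpose_mul_self_eq_smul_one hconference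
    (i := 0) (j := 1) (l := 2) (by decide) (by decide) (by decide)
  norm_num at hdvd
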